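/- For a permutation π of F_{2^k}, arbitrary g : F_{2^k} → F_{2^k}, arbitrary h : F_{2^k} → F_2^{m-k}, and G(x,y) = (x^{2^i}π(y)+g(y), h(y)), the Walsh transform satisfies: W_G((a,b),(u,v)) = ±2^k if u ≠ 0; W_G((a,b),(0,v)) = 0 if a ≠ 0 and v ≠ 0; and W_G((0,b),(0,v)) = 2^k W_h(b,v) for v ≠ 0. -/
import Mathlib


open Finset

def chr (b : ZMod 2) : ℤ := if b = 0 then 1 else -1

def ip {r : ℕ} (a b : Fin r → ZMod 2) : ZMod 2 := ∑ i, a i * b i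

variable {K : Type*} [Field K] [Fintype K] [Algebra (ZMod 2) K]

/-- The absolute trace `Tr^k_1 : F_{2^k} → F_2`. -/
noncomputable def tr (x : K) : ZMod 2 := Algebra.trace (ZMod 2) K x

/-- Walsh transform of the vectorial function `G(x,y) = (x^{2^i}π(y)+g(y), h(y))`
at `((a,b),(u,v))`. -/
noncomputable def walshG (i : ℕ) (π g : K → K) (h : K → Fin r → ZMod 2)
    (a b u : K) (v : Fin r → ZMod 2) : ℤ :=
  ∑ p : K × K,
    chr (tr (a * p.1) + tr (b * p.2) + tr (u * (p.1 ^ (2 ^ i) * π p.2 + g p.2)) +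
      ip v (h p.2))

/-- Walsh transform of `h : F_{2^k} → F_2^{m-k}` at `(b, v)`. -/
noncomputable def walshH (h : K → Fin r → ZMod 2) (b : K) (v : Fin r → ZMod 2) : ℤ :=
  ∑ y : K, chr (tr (b * y) + ip v (h y))

lemma chr_add (s t : ZMod 2) : chr (s + t) = chr s * chr t := by
  revert s t; decide

lemma chr_one_or : ∀ s : ZMod 2, chr s = 1 ∨ chr s = -1 := by decide

set_option linter.unusedSectionVars false

lemma tr_add (x y : K) : tr (x + y) = tr x + tr y := map_add _ x y

lemma tr_sq (x : K) : tr (x ^ 2) = tr x := by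
  have h2 : CharP K 2 := charP_of_injective_algebraMap (algebraMap (ZMod 2) K).injective 2
  have he : ExpChar K 2 := ExpChar.prime Nat.prime_two
  have hp : PerfectRing K 2 := PerfectField.toPerfectRing 2
  let e : K ≃ₐ[ZMod 2] K := AlgEquiv.ofRingEquiv (f := frobeniusEquiv K 2)
    (fun r => by
      show frobenius K 2 _ = _
      rw [frobenius_def, ← map_pow]
      congr 1
      revert r; decide)
  have := Algebra.trace_eq_of_algEquiv e x
  rw [show (e x : K) = x ^ 2 from rfl] at this
  exact this

lemma tr_pow_pow (j : ℕ) (x : K) : tr (x ^ (2 ^ j)) = tr x := by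
  induction j with
  | zero => simp
  | succ n ih =>
      rw [pow_succ, pow_mul, tr_sq, ih]

/-- A nonzero `ZMod 2`-linear form on `K` is balanced. -/
lemma sum_chr_eq_zero {L : K → ZMod 2} (hadd : ∀ x y : K, L (x + y) = L x + L y)
    {x0 : K} (hx0 : L x0 = 1) : ∑ x : K, chr (L x) = 0 := by
  have h2 : ∀ x : K, chr (L (x + x0)) = - chr (L x) := by
    intro x
    rw [hadd, chr_add, hx0]
    simp [chr]
  have h3 : ∑ x : K, chr (L (x + x0)) = - ∑ x : K, chr (L x) := by
    rw [← Finset.sum_neg_distrib]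
    exact Finset.sum_congr rfl fun x _ => h2 x
  have h4 : ∑ x : K, chr (L x) = ∑ x : K, chr (L (x + x0)) :=
    (Fintype.sum_equiv (Equiv.addRight x0) _ _ (fun x => rfl)).symm
  omega

lemma sum_chr_tr_zero (k : ℕ) (hcard : Fintype.card K = 2 ^ k) :
    ∑ x : K, chr (tr ((0 : K) * x)) = (2 : ℤ) ^ k := by
  have h0 : ∀ x : K, chr (tr ((0 : K) * x)) = 1 := by
    intro x
    rw [zero_mul, show tr (0 : K) = (0 : ZMod 2) from map_zero _]
    rfl
  rw [Finset.sum_congr rfl fun x _ => h0 x]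
  simp [Finset.card_univ, hcard]

lemma sum_chr_tr_ne {c : K} (hc : c ≠ 0) :
    ∑ x : K, chr (tr (c * x)) = 0 := by
  have h2 : CharP K 2 := charP_of_injective_algebraMap (algebraMap (ZMod 2) K).injective 2
  have htr : Algebra.trace (ZMod 2) K ≠ 0 := Algebra.trace_ne_zero (ZMod 2) K
  obtain ⟨x1, hx1⟩ : ∃ x1 : K, tr x1 ≠ 0 := by
    by_contra hcon
    push_neg at hcon
    exact htr (LinearMap.ext fun x => hcon x)
  have hx1' : tr x1 = 1 := by
    rcases (by decide : ∀ s : ZMod 2, s = 0 ∨ s = 1) (tr x1) with hs | hs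
    · exact absurd hs hx1
    · exact hs
  refine sum_chr_eq_zero (fun x y => by rw [mul_add, tr_add]) (x0 := c⁻¹ * x1) ?_
  rw [← mul_assoc, mul_inv_cancel₀ hc, one_mul, hx1']

theorem stmt9 (k m i : ℕ) (hk : 0 < k) (hm : k ≤ m) (hi : i < k)
    (hcard : Fintype.card K = 2 ^ k)
    (π : K → K) (hπ : Function.Bijective π)
    (g : K → K) (h : K → Fin (m - k) → ZMod 2) :
    (∀ (a b u : K) (v : Fin (m - k) → ZMod 2), u ≠ 0 →
      walshG i π g h a b u v = 2 ^ k ∨ walshG i π g h a b u v = -(2 ^ k)) ∧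
    (∀ (a b : K) (v : Fin (m - k) → ZMod 2), a ≠ 0 → v ≠ 0 →
      walshG i π g h a b 0 v = 0) ∧
    (∀ (b : K) (v : Fin (m - k) → ZMod 2), v ≠ 0 →
      walshG i π g h 0 b 0 v = 2 ^ k * walshH h b v) := by
  classical
  have h2 : CharP K 2 := charP_of_injective_algebraMap (algebraMap (ZMod 2) K).injective 2
  have hsplit : (2 : ℕ) ^ i * 2 ^ (k - i) = 2 ^ k := by
    rw [← pow_add, Nat.add_sub_cancel' hi.le]
  have hsplit' : (2 : ℕ) ^ (k - i) * 2 ^ i = 2 ^ k := by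
    rw [mul_comm]; exact hsplit
  have hpc : ∀ z : K, z ^ (2 ^ k) = z := by
    intro z; rw [← hcard]; exact FiniteField.pow_card z
  -- shifting the Frobenius power inside the trace
  have tr_shift : ∀ c x : K, tr (c * x ^ (2 ^ i)) = tr (c ^ (2 ^ (k - i)) * x) := by
    intro c x
    rw [← tr_pow_pow (k - i) (c * x ^ (2 ^ i)), mul_pow, ← pow_mul, hsplit, hpc]
  -- the key formula for walshG
  have key : ∀ (a b u : K) (v : Fin (m - k) → ZMod 2),
      walshG i π g h a b u v =
        ∑ y : K, chr (tr (b * y) + tr (u * g y) + ip v (h y)) *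
          (if a + (u * π y) ^ (2 ^ (k - i)) = 0 then ((2 : ℤ) ^ k) else 0) := by
    intro a b u v
    rw [walshG, Fintype.sum_prod_type, Finset.sum_comm]
    refine Finset.sum_congr rfl fun y _ => ?_
    have expE : ∀ x : K,
        tr (a * x) + tr (b * y) + tr (u * (x ^ (2 ^ i) * π y + g y)) + ip v (h y)
          = (tr (b * y) + tr (u * g y) + ip v (h y)) +
            tr ((a + (u * π y) ^ (2 ^ (k - i))) * x) := by
      intro x
      rw [mul_add, tr_add, show u * (x ^ (2 ^ i) * π y) = (u * π y) * x ^ (2 ^ i) by ring,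
        tr_shift, add_mul, tr_add]
      ring
    calc ∑ x : K, chr (tr (a * x) + tr (b * y) +
            tr (u * (x ^ (2 ^ i) * π y + g y)) + ip v (h y))
        = ∑ x : K, chr (tr (b * y) + tr (u * g y) + ip v (h y)) *
            chr (tr ((a + (u * π y) ^ (2 ^ (k - i))) * x)) := by
          refine Finset.sum_congr rfl fun x _ => ?_
          rw [expE x, chr_add]
      _ = chr (tr (b * y) + tr (u * g y) + ip v (h y)) *
            (if a + (u * π y) ^ (2 ^ (k - i)) = 0 then ((2 : ℤ) ^ k) else 0) := by
          rw [← Finset.mul_sum]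
          congr 1
          by_cases hd : a + (u * π y) ^ (2 ^ (k - i)) = 0
          · rw [if_pos hd, hd]
            exact sum_chr_tr_zero k hcard
          · rw [if_neg hd]
            exact sum_chr_tr_ne hd
  refine ⟨?_, ?_, ?_⟩
  · -- u ≠ 0
    intro a b u v hu
    obtain ⟨y0, hy0⟩ := hπ.2 (u⁻¹ * a ^ (2 ^ i))
    have hcond : ∀ y : K, (a + (u * π y) ^ (2 ^ (k - i)) = 0) ↔ y = y0 := by
      intro y
      constructor
      · intro hy
        have h1 : (u * π y) ^ (2 ^ (k - i)) = a := by
          have := CharTwo.add_eq_iff_eq_add.mp hy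
          rw [zero_add] at this
          exact this.symm
        have h2' : u * π y = a ^ (2 ^ i) := by
          have := congrArg (fun z => z ^ (2 ^ i)) h1
          simpa only [← pow_mul, hsplit', hpc] using this
        have hpy : π y = u⁻¹ * a ^ (2 ^ i) := by
          rw [← h2', ← mul_assoc, inv_mul_cancel₀ hu, one_mul]
        exact hπ.1 (hpy.trans hy0.symm)
      · rintro rfl
        rw [hy0, ← mul_assoc, mul_inv_cancel₀ hu, one_mul, ← pow_mul, hsplit, hpc]
        exact CharTwo.add_self_eq_zero a
    have hval : walshG i π g h a b u v =
        chr (tr (b * y0) + tr (u * g y0) + ip v (h y0)) * 2 ^ k := by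
      rw [key a b u v]
      rw [Finset.sum_congr rfl (fun y _ => by rw [if_congr (hcond y) rfl rfl])]
      simp [Finset.sum_ite_eq']
    rcases chr_one_or (tr (b * y0) + tr (u * g y0) + ip v (h y0)) with hc | hc <;>
      rw [hval, hc]
    · left; ring
    · right; ring
  · -- u = 0, a ≠ 0
    intro a b v ha _
    rw [key a b 0 v]
    refine Finset.sum_eq_zero fun y _ => ?_
    have hz : ((0 : K) * π y) ^ (2 ^ (k - i)) = 0 := by
      rw [zero_mul]; exact zero_pow (Nat.two_pow_pos (k - i)).ne'
    rw [hz, add_zero, if_neg ha, mul_zero]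
  · -- u = 0, a = 0
    intro b v _
    rw [key 0 b 0 v, walshH, Finset.mul_sum]
    refine Finset.sum_congr rfl fun y _ => ?_
    have hz : ((0 : K) * π y) ^ (2 ^ (k - i)) = 0 := by
      rw [zero_mul]; exact zero_pow (Nat.two_pow_pos (k - i)).ne'
    rw [hz, add_zero, if_pos rfl, zero_mul, show tr (0 : K) = (0 : ZMod 2) from map_zero _,
      add_zero]
    ring
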